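/- arXiv:0907.5079 — 2 statements merged into one kernel-verified Lean document; each statement's English description precedes it below -/
import Mathlib

section
/- Let T, G, and H be finite graphs. Let φ : Hom(T, G × H) → Hom(T,G) × Hom(T,H) be the map induced by the two projections of the product graph (φ(α) = (u ↦ {g : (g,h) ∈ α(u) for some h}, u ↦ {h : (g,h) ∈ α(u) for some g})), and let ρ : Hom(T,G) × Hom(T,H) → Hom(T, G × H) be defined by ρ(α,β)(u) = α(u) × β(u). Then φ and ρ are well-defined order-preserving maps (the target of ρ ordered as above, the product of posets ordered componentwise), satisfying φ∘ρ = id and ρ(φ(α)) ≥ α for all α; in particular ρ is injective and Hom(T,G) × Hom(T,H) embeds as a strong deformation retract of Hom(T, G × H). -/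
/-!
The projections `φ` and the product map `ρ` form a Galois insertion: `φ α ≤ p ↔ α ≤ ρ p`
holds vertexwise because `α u ⊆ p₁ u ×ˢ p₂ u` says exactly that both projections of
`α u` lie in `p₁ u` and `p₂ u`, and `φ (ρ p) = p` because the sets `p₁ u`, `p₂ u` are
nonempty. Monotonicity, the retraction and injectivity are then formal.
-/

/-- A graph: a vertex set with a symmetric adjacency relation (loops allowed). -/
structure LoopGraph (V : Type) where
  Adj : V → V → Prop
  symm : ∀ x y, Adj x y → Adj y x

/-- Multihomomorphisms from `G` to `H`. -/
def LoopGraph.IsMultiHom {V W : Type} (G : LoopGraph V) (H : LoopGraph W) (α : V → Set W) : Prop :=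
  (∀ v, (α v).Nonempty) ∧ ∀ v w, G.Adj v w → ∀ x ∈ α v, ∀ y ∈ α w, H.Adj x y

/-- The Hom poset `Hom(G,H)`. -/
def HomPoset {V W : Type} (G : LoopGraph V) (H : LoopGraph W) : Type :=
  {α : V → Set W // G.IsMultiHom H α}

instance {V W : Type} (G : LoopGraph V) (H : LoopGraph W) : PartialOrder (HomPoset G H) :=
  Subtype.partialOrder _

/-- The categorical product of graphs. -/
def LoopGraph.prod {V W : Type} (G : LoopGraph V) (H : LoopGraph W) : LoopGraph (V × W) where
  Adj a b := G.Adj a.1 b.1 ∧ H.Adj a.2 b.2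
  symm _ _ h := ⟨G.symm _ _ h.1, H.symm _ _ h.2⟩

/-- The map `φ : Hom(T, G × H) → Hom(T,G) × Hom(T,H)` induced by the projections. -/
def phiProd {U V W : Type} (T : LoopGraph U) (G : LoopGraph V) (H : LoopGraph W)
    (α : HomPoset T (G.prod H)) : HomPoset T G × HomPoset T H :=
  ⟨⟨fun u => {g | ∃ h, (g, h) ∈ α.1 u},
    ⟨fun u => by obtain ⟨⟨g, h⟩, hm⟩ := α.2.1 u; exact ⟨g, h, hm⟩,
     fun v w hvw x hx y hy => by
      obtain ⟨hx1, hx2⟩ := hx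
      obtain ⟨hy1, hy2⟩ := hy
      exact (α.2.2 v w hvw _ hx2 _ hy2).1⟩⟩,
   ⟨fun u => {h | ∃ g, (g, h) ∈ α.1 u},
    ⟨fun u => by obtain ⟨⟨g, h⟩, hm⟩ := α.2.1 u; exact ⟨h, g, hm⟩,
     fun v w hvw x hx y hy => by
      obtain ⟨hx1, hx2⟩ := hx
      obtain ⟨hy1, hy2⟩ := hy
      exact (α.2.2 v w hvw _ hx2 _ hy2).2⟩⟩⟩

/-- The map `ρ : Hom(T,G) × Hom(T,H) → Hom(T, G × H)`, `ρ(α,β)(u) = α(u) × β(u)`. -/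
def rhoProd {U V W : Type} (T : LoopGraph U) (G : LoopGraph V) (H : LoopGraph W)
    (p : HomPoset T G × HomPoset T H) : HomPoset T (G.prod H) :=
  ⟨fun u => p.1.1 u ×ˢ p.2.1 u,
   ⟨fun u => (p.1.2.1 u).prod (p.2.2.1 u),
    fun v w hvw x hx y hy =>
      ⟨p.1.2.2 v w hvw _ hx.1 _ hy.1, p.2.2.2 v w hvw _ hx.2 _ hy.2⟩⟩⟩

section Product

variable {U V W : Type} (T : LoopGraph U) (G : LoopGraph V) (H : LoopGraph W)

theorem phiProd_le_iff (α : HomPoset T (G.prod H)) (p : HomPoset T G × HomPoset T H) :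
    phiProd T G H α ≤ p ↔ α ≤ rhoProd T G H p :=
  ⟨fun hp u x hx => ⟨hp.1 u ⟨x.2, hx⟩, hp.2 u ⟨x.1, hx⟩⟩,
   fun hα => ⟨fun u _ ⟨_, hgh⟩ => (hα u hgh).1, fun u _ ⟨_, hgh⟩ => (hα u hgh).2⟩⟩

theorem gc_phiProd_rhoProd : GaloisConnection (phiProd T G H) (rhoProd T G H) :=
  phiProd_le_iff T G H

theorem le_phiProd_rhoProd (p : HomPoset T G × HomPoset T H) :
    p ≤ phiProd T G H (rhoProd T G H p) := by
  refine ⟨fun u g hg => ?_, fun u h hh => ?_⟩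
  · obtain ⟨h, hh⟩ := p.2.2.1 u
    exact ⟨h, hg, hh⟩
  · obtain ⟨g, hg⟩ := p.1.2.1 u
    exact ⟨g, hg, hh⟩

def galoisInsertionPhiProdRhoProd : GaloisInsertion (phiProd T G H) (rhoProd T G H) :=
  (gc_phiProd_rhoProd T G H).toGaloisInsertion (le_phiProd_rhoProd T G H)

end Product

theorem stmt_7_general {U V W : Type}
    (T : LoopGraph U) (G : LoopGraph V) (H : LoopGraph W) :
    Monotone (phiProd T G H) ∧ Monotone (rhoProd T G H) ∧
    (∀ p, phiProd T G H (rhoProd T G H p) = p) ∧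
    (∀ α, α ≤ rhoProd T G H (phiProd T G H α)) ∧
    Function.Injective (rhoProd T G H) := by
  let gi := galoisInsertionPhiProdRhoProd T G H
  exact ⟨gi.gc.monotone_l, gi.gc.monotone_u, gi.l_u_eq, gi.gc.le_u_l, gi.u_injective⟩

/-- `φ` and `ρ` are order-preserving, `φ ∘ ρ = id`, `ρ(φ(α)) ≥ α`;
in particular `ρ` is injective and `Hom(T,G) × Hom(T,H)` embeds as a strong
deformation retract of `Hom(T, G × H)`. -/
theorem stmt_7 {U V W : Type} [Fintype U] [Fintype V] [Fintype W]
    (T : LoopGraph U) (G : LoopGraph V) (H : LoopGraph W) :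
    Monotone (phiProd T G H) ∧ Monotone (rhoProd T G H) ∧
    (∀ p, phiProd T G H (rhoProd T G H p) = p) ∧
    (∀ α, α ≤ rhoProd T G H (phiProd T G H α)) ∧
    Function.Injective (rhoProd T G H) :=
  stmt_7_general T G H
end

section
/- Let T be a finite connected graph with at least one edge, S a spanning tree of T, and L the set of lengths of the cycles formed by each edge of T not in S together with the simple path in S joining its endpoints. Let Γ be a group acting on the left on a finite graph G by graph automorphisms such that for every vertex v of G, every nonidentity γ ∈ Γ, and every l ∈ L ∪ {4}, there is no walk of length l in G from v to γ·v. Then for every β ∈ Hom(T, G/Γ), every vertex u of T, and every vertex v of G with p(v) ∈ β(u) (where p : G → G/Γ is the quotient homomorphism), there exists a unique α ∈ Hom(T, G) such that p_T(α) = β and v ∈ α(u), where p_T(α)(w) = {p(x) : x ∈ α(w)}. -/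
/-- A walk of length `l` from `v` to `w`. -/
def LoopGraph.HasWalk {V : Type} (G : LoopGraph V) (l : ℕ) (v w : V) : Prop :=
  ∃ f : ℕ → V, f 0 = v ∧ f l = w ∧ ∀ i < l, G.Adj (f i) (f (i + 1))

section Quot

variable {Γ VG : Type} [Group Γ] [MulAction Γ VG]

/-- The orbit relation of a `Γ`-action. -/
def orbRel (Γ : Type) [Group Γ] (VG : Type) [MulAction Γ VG] (v w : VG) : Prop :=
  ∃ γ : Γ, w = γ • v

/-- The quotient graph `G/Γ`: vertices are orbits, two orbits are adjacent iff they
contain adjacent representatives. -/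
def quotGraph (G : LoopGraph VG) (Γ : Type) [Group Γ] [MulAction Γ VG] :
    LoopGraph (Quot (orbRel Γ VG)) where
  Adj X Y := ∃ v w, Quot.mk _ v = X ∧ Quot.mk _ w = Y ∧ G.Adj v w
  symm X Y h := by
    obtain ⟨v, w, hv, hw, hvw⟩ := h
    exact ⟨w, v, hw, hv, G.symm _ _ hvw⟩

/-- The map `p_T : Hom(T,G) → Hom(T, G/Γ)` induced by the quotient homomorphism. -/
def quotHom {VT : Type} (T : LoopGraph VT) (G : LoopGraph VG) (Γ : Type) [Group Γ] [MulAction Γ VG]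
    (α : HomPoset T G) : HomPoset T (quotGraph G Γ) :=
  ⟨fun u => Quot.mk (orbRel Γ VG) '' α.1 u,
   ⟨fun u => (α.2.1 u).image _,
    fun v w hvw x hx y hy => by
      obtain ⟨a, ha, rfl⟩ := hx
      obtain ⟨b, hb, rfl⟩ := hy
      exact ⟨a, b, rfl, rfl, α.2.2 v w hvw a ha b hb⟩⟩⟩

/-- The action of `γ ∈ Γ` on `Hom(T,G)`, `(γ·α)(u) = γ·α(u)`. -/
def homActG {VT : Type} (T : LoopGraph VT) (G : LoopGraph VG) [Group Γ] [MulAction Γ VG]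
    (hGadj : ∀ (γ : Γ) v w, G.Adj v w → G.Adj (γ • v) (γ • w))
    (γ : Γ) (α : HomPoset T G) : HomPoset T G :=
  ⟨fun u => (γ • ·) '' α.1 u,
   ⟨fun u => (α.2.1 u).image _,
    fun v w hvw x hx y hy => by
      obtain ⟨a, ha, rfl⟩ := hx
      obtain ⟨b, hb, rfl⟩ := hy
      exact hGadj γ _ _ (α.2.2 v w hvw a ha b hb)⟩⟩

/-- The rank of a multihomomorphism. -/
noncomputable def homRank {VT : Type} [Fintype VT] (T : LoopGraph VT) {W : Type} (H : LoopGraph W)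
    (α : HomPoset T H) : ℕ :=
  ∑ u : VT, ((α.1 u).ncard - 1)

end Quot

/-!
Write `π` for the quotient map. If `x` and `x'` have a common neighbour `c`, a walk
`y, x, c, x', y'` has length 4, so the condition for length 4 forces `y = y'` whenever `y ~ x` and
`y' ~ x'` lie in one orbit. In particular two lifts of `β` sharing a vertex over `u` agree over
every neighbour of `u`, hence, `T` being connected, everywhere.

For existence, fix a neighbour `z₀` of `v` and lift `β` along the paths of the spanning tree `S`
starting from the neighbours of `z₀` over `u`. By the observation above this picks exactly one
vertex in each orbit of `β w`, and the sets over the two ends of a tree edge are completely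
joined. For a non-tree edge `ab`, a neighbour `y'` of the lift over `a` lies in the orbit of a
lift `y` over `b`, and the tree path from `b` to `a` yields a walk of length `dist a b + 1` from
`y` to `y'`; the condition for the lengths in `L` gives `y = y'`.
-/

open SimpleGraph

namespace LoopGraph

variable {V : Type} {G : LoopGraph V}

theorem hasWalk_zero (x : V) : G.HasWalk 0 x x :=
  ⟨fun _ => x, rfl, rfl, fun _ hi => absurd hi (Nat.not_lt_zero _)⟩

theorem HasWalk.cons {l : ℕ} {x y z : V} (hxy : G.Adj x y) (hyz : G.HasWalk l y z) :
    G.HasWalk (l + 1) x z := by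
  obtain ⟨f, hf0, hfl, hf⟩ := hyz
  refine ⟨fun i => if i = 0 then x else f (i - 1), rfl, by simpa using hfl, ?_⟩
  rintro (_ | i) hi
  · simpa [hf0] using hxy
  · simpa using hf i (by omega)

theorem HasWalk.induction {P : V → Prop} (hP : ∀ a b, G.Adj a b → P a → P b) {l : ℕ} {x y : V}
    (hxy : G.HasWalk l x y) (hx : P x) : P y := by
  obtain ⟨f, rfl, rfl, hf⟩ := hxy
  suffices ∀ i ≤ l, P (f i) from this l le_rfl
  intro i hi
  induction i with
  | zero => exact hx
  | succ i ih => exact hP _ _ (hf i hi) (ih (by omega))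

theorem exists_adj_of_hasWalk {a b w : V} (hab : G.Adj a b) {l : ℕ} (hw : G.HasWalk l w a) :
    ∃ t, G.Adj w t := by
  obtain ⟨f, rfl, rfl, hf⟩ := hw
  rcases l with _ | l
  · exact ⟨b, hab⟩
  · exact ⟨f 1, hf 0 l.succ_pos⟩

def HasCommonNeighbor (G : LoopGraph V) (x y : V) : Prop :=
  ∃ c, G.Adj c x ∧ G.Adj c y

def NoOrbitWalk (G : LoopGraph V) (Γ : Type) [Group Γ] [MulAction Γ V] (l : ℕ) : Prop :=
  ∀ (v : V) (γ : Γ), γ ≠ 1 → ¬ G.HasWalk l v (γ • v)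

end LoopGraph

open LoopGraph

section Lifts

variable {Γ VT VG : Type} [Group Γ] [MulAction Γ VG]

local notation "π" => Quot.mk (orbRel Γ VG)

theorem orbRel_equivalence : Equivalence (orbRel Γ VG) where
  refl x := ⟨1, (one_smul Γ x).symm⟩
  symm := by
    rintro x _ ⟨γ, rfl⟩
    exact ⟨γ⁻¹, (inv_smul_smul γ x).symm⟩
  trans := by
    rintro x _ _ ⟨γ, rfl⟩ ⟨δ, rfl⟩
    exact ⟨δ * γ, (mul_smul δ γ x).symm⟩

theorem mk_orbRel_eq_iff {x y : VG} : π x = π y ↔ ∃ γ : Γ, y = γ • x := by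
  rw [Quot.eq]
  exact orbRel_equivalence.eqvGen_iff

theorem mk_orbRel_smul (γ : Γ) (x : VG) : π (γ • x) = π x :=
  (Quot.sound ⟨γ, rfl⟩).symm

section Lifting

variable {T : LoopGraph VT} {G : LoopGraph VG}

theorem exists_adj_mk_eq (hGadj : ∀ (γ : Γ) v w, G.Adj v w → G.Adj (γ • v) (γ • w))
    (β : HomPoset T (quotGraph G Γ)) {a b : VT} {x : VG} {Y : Quot (orbRel Γ VG)}
    (hab : T.Adj a b) (hx : π x ∈ β.1 a) (hY : Y ∈ β.1 b) : ∃ y, π y = Y ∧ G.Adj x y := by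
  obtain ⟨x', y', hx', rfl, hxy'⟩ := β.2.2 a b hab _ hx Y hY
  obtain ⟨γ, rfl⟩ := mk_orbRel_eq_iff.mp hx'
  exact ⟨γ • y', mk_orbRel_smul γ y', hGadj γ _ _ hxy'⟩

theorem LoopGraph.NoOrbitWalk.eq {l : ℕ} (hl : G.NoOrbitWalk Γ l) {x y : VG}
    (hxy : G.HasWalk l x y) (h : π x = π y) : x = y := by
  obtain ⟨γ, rfl⟩ := mk_orbRel_eq_iff.mp h
  by_contra hne
  exact hl x γ (by rintro rfl; exact hne (one_smul Γ x).symm) hxy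

theorem eq_of_hasCommonNeighbor_of_adj (h4 : G.NoOrbitWalk Γ 4) {x x' y y' : VG}
    (hc : G.HasCommonNeighbor x x')
    (hxy : G.Adj x y) (hxy' : G.Adj x' y') (h : π y = π y') : y = y' := by
  obtain ⟨c, hcx, hcx'⟩ := hc
  refine h4.eq ?_ h
  exact .cons (G.symm _ _ hxy) <| .cons (G.symm _ _ hcx) <| .cons hcx' <| .cons hxy' <|
    hasWalk_zero y'

theorem eq_of_hasCommonNeighbor (h4 : G.NoOrbitWalk Γ 4) {y y' : VG}
    (hc : G.HasCommonNeighbor y y') (h : π y = π y') : y = y' := by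
  obtain ⟨c, hcy, hcy'⟩ := hc
  exact eq_of_hasCommonNeighbor_of_adj h4 ⟨y', G.symm _ _ hcy', G.symm _ _ hcy'⟩ hcy hcy' h

theorem adj_of_hasCommonNeighbor (hGadj : ∀ (γ : Γ) v w, G.Adj v w → G.Adj (γ • v) (γ • w))
    (h4 : G.NoOrbitWalk Γ 4) (β : HomPoset T (quotGraph G Γ)) {a b : VT} {x x' y : VG}
    (hc : G.HasCommonNeighbor x x') (hab : T.Adj a b) (hx' : π x' ∈ β.1 a) (hy : π y ∈ β.1 b)
    (hxy : G.Adj x y) : G.Adj x' y := by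
  obtain ⟨y', hy', hxy'⟩ := exists_adj_mk_eq hGadj β hab hx' hy
  rwa [eq_of_hasCommonNeighbor_of_adj h4 hc hxy hxy' hy'.symm]

end Lifting

theorem SimpleGraph.IsAcyclic.notMem_support_or_notMem_support {V : Type} {S : SimpleGraph V}
    (hS : S.IsAcyclic) {u a b : V} (hab : S.Adj a b) {qa : S.Walk u a} (hqa : qa.IsPath)
    {qb : S.Walk u b} (hqb : qb.IsPath) : b ∉ qa.support ∨ a ∉ qb.support := by
  classical
  by_contra! ⟨hb, ha⟩
  have hqb_eq : qb = qa.takeUntil b hb :=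
    congrArg Subtype.val ((hS.subsingleton_path u b).elim ⟨qb, hqb⟩ ⟨_, hqa.takeUntil hb⟩)
  have hqa_eq : qa = qb.takeUntil a ha :=
    congrArg Subtype.val ((hS.subsingleton_path u a).elim ⟨qa, hqa⟩ ⟨_, hqb.takeUntil ha⟩)
  have hlt_a := qa.length_takeUntil_lt_length hb hab.ne'
  have hlt_b := qb.length_takeUntil_lt_length ha hab.ne
  rw [← hqb_eq] at hlt_a
  rw [← hqa_eq] at hlt_b
  omega

section WalkOver

variable {S : SimpleGraph VT} {T : LoopGraph VT} {G : LoopGraph VG}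

def WalkOver (β : HomPoset T (quotGraph G Γ)) : ∀ {a b : VT}, S.Walk a b → VG → VG → Prop
  | a, _, .nil, x, y => π x ∈ β.1 a ∧ x = y
  | a, _, .cons _ q, x, y => π x ∈ β.1 a ∧ ∃ x', G.Adj x x' ∧ WalkOver β q x' y

variable {β : HomPoset T (quotGraph G Γ)} {a b : VT} {x y : VG}

theorem WalkOver.mk_mem_start {q : S.Walk a b} (h : WalkOver β q x y) : π x ∈ β.1 a := by
  cases q <;> exact h.1

theorem WalkOver.mk_mem_end {q : S.Walk a b} (h : WalkOver β q x y) : π y ∈ β.1 b := by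
  induction q generalizing x with
  | nil => exact h.2 ▸ h.1
  | cons _ q ih => exact ih h.2.choose_spec.2

theorem WalkOver.concat {c : VT} {z : VG} {q : S.Walk a b} (h : WalkOver β q x y)
    (hbc : S.Adj b c) (hyz : G.Adj y z) (hz : π z ∈ β.1 c) : WalkOver β (q.concat hbc) x z := by
  induction q generalizing x with
  | nil =>
    obtain ⟨hx, rfl⟩ := h
    exact ⟨hx, z, hyz, hz, rfl⟩
  | cons _ q ih =>
    obtain ⟨hx, x', hxx', h⟩ := h
    rw [Walk.concat_cons]
    exact ⟨hx, x', hxx', ih h hbc⟩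

variable (hGadj : ∀ (γ : Γ) v w, G.Adj v w → G.Adj (γ • v) (γ • w))
  (hSsub : ∀ a b, S.Adj a b → T.Adj a b)
include hGadj hSsub

theorem exists_walkOver (β : HomPoset T (quotGraph G Γ)) (q : S.Walk a b) (hx : π x ∈ β.1 a)
    {Y : Quot (orbRel Γ VG)} (hY : Y ∈ β.1 b) (hq : q.length = 0 → π x = Y) :
    ∃ y, WalkOver β q x y ∧ π y = Y := by
  induction q generalizing x with
  | nil => exact ⟨x, ⟨hx, rfl⟩, hq rfl⟩
  | @cons a a' b hab q ih =>
    obtain ⟨Y', hY', hqY'⟩ : ∃ Y' ∈ β.1 a', q.length = 0 → Y' = Y := by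
      by_cases hq0 : q.length = 0
      · obtain rfl := Walk.eq_of_length_eq_zero hq0
        exact ⟨Y, hY, fun _ => rfl⟩
      · obtain ⟨Y', hY'⟩ := β.2.1 a'
        exact ⟨Y', hY', fun h => absurd h hq0⟩
    obtain ⟨x', rfl, hxx'⟩ := exists_adj_mk_eq hGadj β (hSsub _ _ hab) hx hY'
    obtain ⟨y, hy, hyY⟩ := ih hY' hY hqY'
    exact ⟨y, ⟨hx, x', hxx', hy⟩, hyY⟩

theorem WalkOver.hasCommonNeighbor (h4 : G.NoOrbitWalk Γ 4) {q : S.Walk a b} {z z' x' : VG}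
    (h : WalkOver β q z x) (h' : WalkOver β q z' x') (hc : G.HasCommonNeighbor z z') :
    G.HasCommonNeighbor x x' := by
  induction q generalizing z z' with
  | nil =>
    obtain ⟨-, rfl⟩ := h
    obtain ⟨-, rfl⟩ := h'
    exact hc
  | cons hab q ih =>
    obtain ⟨-, y, hzy, hy⟩ := h
    obtain ⟨hz', y', hzy', hy'⟩ := h'
    exact ih hy hy'
      ⟨z', adj_of_hasCommonNeighbor hGadj h4 β hc (hSsub _ _ hab) hz' hy.mk_mem_start hzy, hzy'⟩

end WalkOver

theorem hasWalk_succ_of_forall_adj {S : SimpleGraph VT} {G : LoopGraph VG} (σ : VT → Set VG)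
    (hσ : ∀ a b, S.Adj a b → ∀ x ∈ σ a, ∀ y ∈ σ b, G.Adj x y) (hne : ∀ a, (σ a).Nonempty)
    {a c : VT} (q : S.Walk c a) {y y' : VG} (hy : y ∈ σ c) (hy' : ∀ x ∈ σ a, G.Adj x y') :
    G.HasWalk (q.length + 1) y y' := by
  induction q generalizing y with
  | nil => exact .cons (hy' y hy) (hasWalk_zero y')
  | cons hcd q ih =>
    obtain ⟨z, hz⟩ := hne _
    exact .cons (hσ _ _ hcd y hy z hz) (ih hz hy')

section TreeLift

variable {S : SimpleGraph VT} {T : LoopGraph VT} {G : LoopGraph VG}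

def treeLift (S : SimpleGraph VT) (β : HomPoset T (quotGraph G Γ)) (u : VT) (σ₀ : Set VG)
    (w : VT) : Set VG :=
  {x | ∃ q : S.Walk u w, q.IsPath ∧ ∃ z ∈ σ₀, WalkOver β q z x}

variable {β : HomPoset T (quotGraph G Γ)} {u a b : VT} {σ₀ : Set VG} {x y : VG}

theorem mk_mem_of_mem_treeLift {w : VT} (hx : x ∈ treeLift S β u σ₀ w) : π x ∈ β.1 w :=
  let ⟨_, _, _, _, h⟩ := hx
  h.mk_mem_end

variable (hGadj : ∀ (γ : Γ) v w, G.Adj v w → G.Adj (γ • v) (γ • w))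
  (h4 : G.NoOrbitWalk Γ 4) (hS : S.IsTree) (hSsub : ∀ a b, S.Adj a b → T.Adj a b)
  (hσ₀ : ∀ z ∈ σ₀, ∀ z' ∈ σ₀, G.HasCommonNeighbor z z')
include hGadj h4 hS hSsub hσ₀

theorem treeLift_hasCommonNeighbor {w : VT} (hx : x ∈ treeLift S β u σ₀ w)
    (hy : y ∈ treeLift S β u σ₀ w) : G.HasCommonNeighbor x y := by
  obtain ⟨q, hq, z, hz, hzx⟩ := hx
  obtain ⟨q', hq', z', hz', hzy⟩ := hy
  obtain rfl : q = q' :=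
    congrArg Subtype.val ((hS.isAcyclic.subsingleton_path u w).elim ⟨q, hq⟩ ⟨q', hq'⟩)
  exact hzx.hasCommonNeighbor hGadj hSsub h4 hzy (hσ₀ z hz z' hz')

theorem eq_of_mem_treeLift {w : VT} (hx : x ∈ treeLift S β u σ₀ w)
    (hy : y ∈ treeLift S β u σ₀ w) (h : π x = π y) : x = y :=
  eq_of_hasCommonNeighbor h4 (treeLift_hasCommonNeighbor hGadj h4 hS hSsub hσ₀ hx hy) h

theorem adj_of_walkOver_of_notMem_support {q : S.Walk u a} (hq : q.IsPath) (hb : b ∉ q.support)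
    (hab : S.Adj a b) {z : VG} (hz : z ∈ σ₀) (hzx : WalkOver β q z x)
    (hy : y ∈ treeLift S β u σ₀ b) : G.Adj x y := by
  have hyβ := mk_mem_of_mem_treeLift hy
  obtain ⟨y', hy', hxy'⟩ := exists_adj_mk_eq hGadj β (hSsub _ _ hab) hzx.mk_mem_end hyβ
  have hy'σ : y' ∈ treeLift S β u σ₀ b :=
    ⟨q.concat hab, hq.concat hb hab, z, hz, hzx.concat hab hxy' (hy' ▸ hyβ)⟩
  rwa [eq_of_mem_treeLift hGadj h4 hS hSsub hσ₀ hy'σ hy hy'] at hxy'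

theorem treeLift_adj_of_adj (hab : S.Adj a b) (hx : x ∈ treeLift S β u σ₀ a)
    (hy : y ∈ treeLift S β u σ₀ b) : G.Adj x y := by
  obtain ⟨qa, hqa, z, hz, hzx⟩ := hx
  obtain ⟨qb, hqb, z', hz', hz'y⟩ := hy
  rcases hS.isAcyclic.notMem_support_or_notMem_support hab hqa hqb with hb | ha
  · exact adj_of_walkOver_of_notMem_support hGadj h4 hS hSsub hσ₀ hqa hb hab hz hzx
      ⟨qb, hqb, z', hz', hz'y⟩
  · exact G.symm _ _ (adj_of_walkOver_of_notMem_support hGadj h4 hS hSsub hσ₀ hqb ha hab.symm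
      hz' hz'y ⟨qa, hqa, z, hz, hzx⟩)

variable (hσ₀β : Quot.mk (orbRel Γ VG) '' σ₀ = β.1 u)
include hσ₀β

omit h4 hσ₀ in
theorem exists_mem_treeLift_mk_eq {w : VT} {Y : Quot (orbRel Γ VG)} (hY : Y ∈ β.1 w) :
    ∃ x ∈ treeLift S β u σ₀ w, π x = Y := by
  obtain ⟨q, hq, -⟩ := hS.existsUnique_path u w
  obtain ⟨z, hz, hzY⟩ : ∃ z ∈ σ₀, q.length = 0 → π z = Y := by
    by_cases hq0 : q.length = 0
    · obtain rfl := Walk.eq_of_length_eq_zero hq0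
      obtain ⟨z, hz, hzY⟩ : Y ∈ π '' σ₀ := hσ₀β ▸ hY
      exact ⟨z, hz, fun _ => hzY⟩
    · obtain ⟨Z, hZ⟩ := β.2.1 u
      rw [← hσ₀β] at hZ
      obtain ⟨z, hz, -⟩ := hZ
      exact ⟨z, hz, fun h => absurd h hq0⟩
  obtain ⟨x, hzx, rfl⟩ := exists_walkOver hGadj hSsub β q (hσ₀β ▸ ⟨z, hz, rfl⟩) hY hzY
  exact ⟨x, ⟨q, hq, z, hz, hzx⟩, rfl⟩

omit h4 hσ₀ in
theorem treeLift_nonempty (w : VT) : (treeLift S β u σ₀ w).Nonempty :=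
  let ⟨x, hx, _⟩ := exists_mem_treeLift_mk_eq hGadj hS hSsub hσ₀β (β.2.1 w).some_mem
  ⟨x, hx⟩

theorem treeLift_adj_of_noOrbitWalk (hab : T.Adj a b) (hL : G.NoOrbitWalk Γ (S.dist a b + 1))
    (hx : x ∈ treeLift S β u σ₀ a) (hy : y ∈ treeLift S β u σ₀ b) : G.Adj x y := by
  have hyβ := mk_mem_of_mem_treeLift hy
  obtain ⟨y', hy', hxy'⟩ := exists_adj_mk_eq hGadj β hab (mk_mem_of_mem_treeLift hx) hyβ
  have hy'_adj : ∀ x' ∈ treeLift S β u σ₀ a, G.Adj x' y' := fun x' hx' =>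
    adj_of_hasCommonNeighbor hGadj h4 β (treeLift_hasCommonNeighbor hGadj h4 hS hSsub hσ₀ hx hx')
      hab (mk_mem_of_mem_treeLift hx') (hy' ▸ hyβ) hxy'
  obtain ⟨q, hq⟩ := hS.connected.exists_walk_length_eq_dist b a
  have hyy' := hasWalk_succ_of_forall_adj _ (fun _ _ hcd _ hx _ hy =>
    treeLift_adj_of_adj hGadj h4 hS hSsub hσ₀ hcd hx hy)
    (treeLift_nonempty hGadj hS hSsub hσ₀β) q hy hy'_adj
  rw [hq, dist_comm] at hyy'
  rwa [← hL.eq hyy' hy'.symm] at hxy'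

theorem treeLift_isMultiHom
    (hL : ∀ a b, T.Adj a b → ¬ S.Adj a b → G.NoOrbitWalk Γ (S.dist a b + 1)) :
    T.IsMultiHom G (treeLift S β u σ₀) := by
  refine ⟨treeLift_nonempty hGadj hS hSsub hσ₀β, fun a b hab x hx y hy => ?_⟩
  by_cases hSab : S.Adj a b
  · exact treeLift_adj_of_adj hGadj h4 hS hSsub hσ₀ hSab hx hy
  · exact treeLift_adj_of_noOrbitWalk hGadj h4 hS hSsub hσ₀ hσ₀β hab (hL a b hab hSab) hx hy

theorem quotHom_treeLift
    (hL : ∀ a b, T.Adj a b → ¬ S.Adj a b → G.NoOrbitWalk Γ (S.dist a b + 1)) :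
    quotHom T G Γ ⟨treeLift S β u σ₀, treeLift_isMultiHom hGadj h4 hS hSsub hσ₀ hσ₀β hL⟩ = β := by
  refine Subtype.ext (funext fun w => Set.Subset.antisymm ?_ fun Y hY => ?_)
  · rintro _ ⟨x, hx, rfl⟩
    exact mk_mem_of_mem_treeLift hx
  · obtain ⟨x, hx, rfl⟩ := exists_mem_treeLift_mk_eq hGadj hS hSsub hσ₀β hY
    exact ⟨x, hx, rfl⟩

end TreeLift

section Existence

variable {S : SimpleGraph VT} {T : LoopGraph VT} {G : LoopGraph VG}

theorem exists_quotHom_eq (hGadj : ∀ (γ : Γ) v w, G.Adj v w → G.Adj (γ • v) (γ • w))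
    (h4 : G.NoOrbitWalk Γ 4) (hS : S.IsTree) (hSsub : ∀ a b, S.Adj a b → T.Adj a b)
    (hL : ∀ a b, T.Adj a b → ¬ S.Adj a b → G.NoOrbitWalk Γ (S.dist a b + 1))
    (β : HomPoset T (quotGraph G Γ)) {u t : VT} (hut : T.Adj u t) {v : VG} (hv : π v ∈ β.1 u) :
    ∃ α : HomPoset T G, quotHom T G Γ α = β ∧ v ∈ α.1 u := by
  obtain ⟨Z, hZ⟩ := β.2.1 t
  obtain ⟨z₀, rfl, hvz₀⟩ := exists_adj_mk_eq hGadj β hut hv hZ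
  set σ₀ := {x | π x ∈ β.1 u ∧ G.Adj z₀ x}
  have hσ₀ : ∀ z ∈ σ₀, ∀ z' ∈ σ₀, G.HasCommonNeighbor z z' := fun _ hz _ hz' => ⟨z₀, hz.2, hz'.2⟩
  have hσ₀β : π '' σ₀ = β.1 u := by
    refine Set.Subset.antisymm (Set.image_subset_iff.mpr fun _ hz => hz.1) fun Y hY => ?_
    obtain ⟨z, rfl, hz₀z⟩ := exists_adj_mk_eq hGadj β (T.symm _ _ hut) hZ hY
    exact ⟨z, ⟨hY, hz₀z⟩, rfl⟩
  exact ⟨_, quotHom_treeLift hGadj h4 hS hSsub hσ₀ hσ₀β hL,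
    .nil, .nil, v, ⟨hv, G.symm _ _ hvz₀⟩, hv, rfl⟩

end Existence

section Uniqueness

variable {T : LoopGraph VT} {G : LoopGraph VG} (h4 : G.NoOrbitWalk Γ 4)
include h4

theorem subset_of_quotHom_eq {α α' : HomPoset T G} (h : quotHom T G Γ α = quotHom T G Γ α')
    {a b : VT} (hab : T.Adj a b) {x : VG} (hx : x ∈ α.1 a) (hx' : x ∈ α'.1 a) :
    α.1 b ⊆ α'.1 b := by
  intro y hy
  obtain ⟨y', hy', hyy'⟩ : π y ∈ (quotHom T G Γ α').1 b := h ▸ ⟨y, hy, rfl⟩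
  rwa [eq_of_hasCommonNeighbor h4
    ⟨x, α.2.2 a b hab x hx y hy, α'.2.2 a b hab x hx' y' hy'⟩ hyy'.symm]

theorem eq_of_quotHom_eq (hconn : ∀ a b : VT, ∃ l, T.HasWalk l a b)
    (hnb : ∀ w, ∃ t, T.Adj w t) {α α' : HomPoset T G} (h : quotHom T G Γ α = quotHom T G Γ α')
    {u : VT} {x : VG} (hx : x ∈ α.1 u) (hx' : x ∈ α'.1 u) : α = α' := by
  have hmeet : ∀ w, ∃ y, y ∈ α.1 w ∧ y ∈ α'.1 w := fun w =>
    (hconn u w).choose_spec.induction (P := fun w => ∃ y, y ∈ α.1 w ∧ y ∈ α'.1 w)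
      (fun a b hab ⟨y, hy, hy'⟩ =>
        let ⟨z, hz⟩ := α.2.1 b
        ⟨z, hz, subset_of_quotHom_eq h4 h hab hy hy' hz⟩) ⟨x, hx, hx'⟩
  refine Subtype.ext (funext fun w => ?_)
  obtain ⟨t, hwt⟩ := hnb w
  obtain ⟨y, hy, hy'⟩ := hmeet t
  exact (subset_of_quotHom_eq h4 h (T.symm _ _ hwt) hy hy').antisymm
    (subset_of_quotHom_eq h4 h.symm (T.symm _ _ hwt) hy' hy)

end Uniqueness

end Lifts

theorem stmt_18_general {Γ VT VG : Type} [Group Γ] [MulAction Γ VG]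
    (T : LoopGraph VT) (G : LoopGraph VG)
    (hGadj : ∀ (γ : Γ) v w, G.Adj v w → G.Adj (γ • v) (γ • w))
    -- T is connected with at least one edge
    (hTconn : ∀ a b : VT, ∃ l, T.HasWalk l a b)
    (hedge : ∃ a b, T.Adj a b)
    -- S is a spanning tree of T
    (S : SimpleGraph VT) (hStree : S.IsTree)
    (hSsub : ∀ a b, S.Adj a b → T.Adj a b)
    -- the walk condition, with L the set of fundamental cycle lengths
    (hdisc : ∀ (v : VG) (γ : Γ), γ ≠ 1 → ∀ l : ℕ,
      ((∃ a b, T.Adj a b ∧ ¬ S.Adj a b ∧ l = S.dist a b + 1) ∨ l = 4) →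
      ¬ G.HasWalk l v (γ • v)) :
    ∀ (β : HomPoset T (quotGraph G Γ)) (u : VT) (v : VG),
      Quot.mk (orbRel Γ VG) v ∈ β.1 u →
      ∃! α : HomPoset T G, quotHom T G Γ α = β ∧ v ∈ α.1 u := by
  intro β u v hv
  have h4 : G.NoOrbitWalk Γ 4 := fun x γ hγ => hdisc x γ hγ 4 (.inr rfl)
  have hL : ∀ a b, T.Adj a b → ¬ S.Adj a b → G.NoOrbitWalk Γ (S.dist a b + 1) :=
    fun a b hab hSab x γ hγ => hdisc x γ hγ _ (.inl ⟨a, b, hab, hSab, rfl⟩)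
  obtain ⟨a, b, hab⟩ := hedge
  have hnb : ∀ w, ∃ t, T.Adj w t := fun w => exists_adj_of_hasWalk hab (hTconn w a).choose_spec
  obtain ⟨t, hut⟩ := hnb u
  obtain ⟨α, hα, hvα⟩ := exists_quotHom_eq hGadj h4 hStree hSsub hL β hut hv
  exact ⟨α, ⟨hα, hvα⟩, fun α' ⟨hα', hvα'⟩ =>
    eq_of_quotHom_eq h4 hTconn hnb (hα'.trans hα.symm) hvα' hvα⟩

/-- under the walk condition on lengths in `L ∪ {4}`, every
multihomomorphism `β ∈ Hom(T, G/Γ)` lifts uniquely through `p_T` once the lift of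
one vertex is prescribed: given `u ∈ V(T)` and `v ∈ V(G)` with `p(v) ∈ β(u)`, there
is a unique `α ∈ Hom(T,G)` with `p_T(α) = β` and `v ∈ α(u)`. -/
theorem stmt_18 {Γ VT VG : Type} [Group Γ] [Fintype VT] [Fintype VG] [MulAction Γ VG]
    (T : LoopGraph VT) (G : LoopGraph VG)
    (hGadj : ∀ (γ : Γ) v w, G.Adj v w → G.Adj (γ • v) (γ • w))
    -- T is connected with at least one edge
    (hTconn : ∀ a b : VT, ∃ l, T.HasWalk l a b)
    (hedge : ∃ a b, T.Adj a b)
    -- S is a spanning tree of T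
    (S : SimpleGraph VT) (hStree : S.IsTree)
    (hSsub : ∀ a b, S.Adj a b → T.Adj a b)
    -- the walk condition, with L the set of fundamental cycle lengths
    (hdisc : ∀ (v : VG) (γ : Γ), γ ≠ 1 → ∀ l : ℕ,
      ((∃ a b, T.Adj a b ∧ ¬ S.Adj a b ∧ l = S.dist a b + 1) ∨ l = 4) →
      ¬ G.HasWalk l v (γ • v)) :
    ∀ (β : HomPoset T (quotGraph G Γ)) (u : VT) (v : VG),
      Quot.mk (orbRel Γ VG) v ∈ β.1 u →
      ∃! α : HomPoset T G, quotHom T G Γ α = β ∧ v ∈ α.1 u :=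
  stmt_18_general T G hGadj hTconn hedge S hStree hSsub hdisc
end
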